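/- Let H be an odd-connected hypergraph all of whose hyperedges have even size. Then: (a) the all-ones state 1 is a fixed point of the two-party voter model; (b) from any state other than 1, the all-zero state 0 is reachable; and (c) every stabilizing set B for the annihilating random walk on H has even cardinality, so in state 1 parity is reached on every stabilizing set. -/

import Mathlib

/-!
In GF(2) the XOR of the labels on `e` without `i` is the XOR over all of `e` plus `A i`.
As `|e|` is even, in state `1` this is `0 + 1 = 1`, so `1` is fixed. If `A ≠ 0, 1`, its
support `S` is proper and nonempty, so odd-connectedness gives a hyperedge `e` with `|S ∩ e|`
odd; updating any `i ∈ S ∩ e` yields `1 + 1 = 0`, which shrinks the support, and induction on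
its size reaches `0`. Summing the stabilizing equations over all vertices counts each `x_e`
exactly `|e| ≡ 0` times, so `|B| ≡ 0`.
-/

/-- One move of the two-party voter model on a hypergraph: choose a vertex `i` and a
hyperedge `e ∋ i` and set `A_i` to the XOR of the labels of the other vertices of `e`. -/
def voterMove {V : Type*} [DecidableEq V] (E : Finset (Finset V))
    (A A' : V → ZMod 2) : Prop :=
  ∃ i : V, ∃ e ∈ E, i ∈ e ∧ A' = Function.update A i (∑ j ∈ e.erase i, A j)

open Finset Relation

namespace ZMod

lemma eq_zero_of_ne_one {a : ZMod 2} (h : a ≠ 1) : a = 0 := by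
  revert a
  decide

lemma sum_eq_card_filter_eq_one {ι : Type*} (s : Finset ι) (f : ι → ZMod 2) :
    ∑ i ∈ s, f i = #{i ∈ s | f i = 1} := by
  rw [natCast_card_filter]
  refine sum_congr rfl fun i _ => ?_
  split_ifs with h
  · exact h
  · exact eq_zero_of_ne_one h

lemma sum_erase_eq_sum_add {ι : Type*} [DecidableEq ι] {s : Finset ι} {i : ι} (hi : i ∈ s)
    (f : ι → ZMod 2) : ∑ j ∈ s.erase i, f j = ∑ j ∈ s, f j + f i := by
  rw [← sum_erase_add s f hi, add_assoc, CharTwo.add_self_eq_zero, add_zero]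

end ZMod

section VoterModel

variable {V : Type*} [DecidableEq V] {E : Finset (Finset V)}

theorem voterMove_one_eq_one (heven : ∀ e ∈ E, Even #e) {A' : V → ZMod 2}
    (h : voterMove E (fun _ => 1) A') : A' = fun _ => 1 := by
  obtain ⟨i, e, he, hie, rfl⟩ := h
  have hsum : ∑ _j ∈ e.erase i, (1 : ZMod 2) = 1 := by
    rw [ZMod.sum_erase_eq_sum_add hie, sum_const, nsmul_one,
      ZMod.natCast_eq_zero_iff_even.2 (heven e he), zero_add]
  rw [hsum, Function.update_eq_self]

theorem voterMove_update_zero {A : V → ZMod 2} {i : V} {e : Finset V} (he : e ∈ E)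
    (hie : i ∈ e) (hAi : A i = 1) (hodd : Odd #{j ∈ e | A j = 1}) :
    voterMove E A (Function.update A i 0) := by
  refine ⟨i, e, he, hie, ?_⟩
  rw [ZMod.sum_erase_eq_sum_add hie, ZMod.sum_eq_card_filter_eq_one,
    ZMod.natCast_eq_one_iff_odd.2 hodd, hAi]
  rfl

variable [Fintype V]

def OddConnected (E : Finset (Finset V)) : Prop :=
  ¬ ∃ B : Finset V, B ≠ ∅ ∧ B ≠ univ ∧ ∀ e ∈ E, Even #(B ∩ e)

theorem exists_voterMove_update_zero
    (hE : OddConnected E)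
    {A : V → ZMod 2} (h0 : A ≠ fun _ => 0) (h1 : A ≠ fun _ => 1) :
    ∃ i, A i = 1 ∧ voterMove E A (Function.update A i 0) := by
  set S : Finset V := {v | A v = 1}
  have hS0 : S ≠ ∅ := fun hS => h0 <| funext fun v =>
    ZMod.eq_zero_of_ne_one fun hv => by simpa [hS] using (by simpa [S] : v ∈ S)
  have hS1 : S ≠ univ := fun hS => h1 <| funext fun v => by
    simpa [S] using (hS ▸ mem_univ v : v ∈ S)
  obtain ⟨e, he, hodd⟩ : ∃ e ∈ E, Odd #(S ∩ e) := by
    by_contra! h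
    exact hE ⟨S, hS0, hS1, fun e he => Nat.not_odd_iff_even.1 (h e he)⟩
  have hSe : S ∩ e = {j ∈ e | A j = 1} := by ext; simp [S, and_comm]
  obtain ⟨i, hi⟩ := card_pos.1 hodd.pos
  obtain ⟨hiS, hie⟩ := mem_inter.1 hi
  have hAi : A i = 1 := by simpa [S] using hiS
  exact ⟨i, hAi, voterMove_update_zero he hie hAi (hSe ▸ hodd)⟩

theorem reflTransGen_voterMove_zero
    (hE : OddConnected E)
    {A : V → ZMod 2} (h1 : A ≠ fun _ => 1) : ReflTransGen (voterMove E) A fun _ => 0 := by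
  induction hn : #{v | A v = 1} using Nat.strong_induction_on generalizing A with
  | _ n ih =>
  by_cases h0 : A = fun _ => 0
  · rw [h0]
  obtain ⟨i, hAi, hmove⟩ := exists_voterMove_update_zero hE h0 h1
  have hsupp : ({v | Function.update A i 0 v = 1} : Finset V) =
      ({v | A v = 1} : Finset V).erase i := by
    ext v
    rcases eq_or_ne v i with rfl | hv <;> simp [*]
  refine .head hmove (ih _ ?_ (fun h => ?_) rfl)
  · rw [hsupp, ← hn]
    exact card_erase_lt_of_mem ((mem_filter_univ _).2 hAi)
  · simpa using congrFun h i

theorem even_card_of_stabilizing (heven : ∀ e ∈ E, Even #e) {B : Finset V}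
    {z : Finset V → ZMod 2} (hz : ∀ v, ∑ e ∈ E with v ∈ e, z e = if v ∈ B then 1 else 0) :
    Even #B := by
  rw [← ZMod.natCast_eq_zero_iff_even]
  calc (#B : ZMod 2) = ∑ v, if v ∈ B then 1 else 0 := by simp
    _ = ∑ v, ∑ e ∈ E with v ∈ e, z e := by simp_rw [hz]
    _ = ∑ e ∈ E, #e • z e := by
      rw [sum_comm' (t' := E) (s' := fun e => {v | v ∈ e}) (fun v e => by simp [and_comm])]
      simp
    _ = 0 := sum_eq_zero fun e he => by
      rw [nsmul_eq_mul, ZMod.natCast_eq_zero_iff_even.2 (heven e he), zero_mul]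

end VoterModel

/-- Let `H` be an odd-connected hypergraph all of whose hyperedges have even size. Then:
(a) the all-ones state is a fixed point of the two-party voter model; (b) from any state
other than all-ones, the all-zero state is reachable; (c) every stabilizing set `B` for
the annihilating random walk on `H` (i.e. the GF(2) system `∑_{e∋v} x_e = 1_B(v)` is
solvable) has even cardinality, so in the all-ones state parity is reached on `B`. -/
theorem stmt_16 {V : Type*} [Fintype V] [DecidableEq V]
    (E : Finset (Finset V))
    (hoddconn : ¬ ∃ B : Finset V, B ≠ ∅ ∧ B ≠ Finset.univ ∧
      ∀ e ∈ E, Even ((B ∩ e).card))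
    (heven : ∀ e ∈ E, Even e.card) :
    (∀ A' : V → ZMod 2, voterMove E (fun _ => 1) A' → A' = fun _ => 1) ∧
    (∀ A : V → ZMod 2, A ≠ (fun _ => 1) →
      Relation.ReflTransGen (voterMove E) A (fun _ => 0)) ∧
    (∀ B : Finset V,
      (∃ z : Finset V → ZMod 2,
        ∀ v : V, ∑ e ∈ E.filter (fun e => v ∈ e), z e = (if v ∈ B then 1 else 0)) →
      Even B.card ∧ ∑ _v ∈ B, (1 : ZMod 2) = 0) := by
  refine ⟨fun _ => voterMove_one_eq_one heven, fun _ => reflTransGen_voterMove_zero hoddconn,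
    fun B ⟨z, hz⟩ => ?_⟩
  have hB : Even #B := even_card_of_stabilizing heven hz
  exact ⟨hB, by simpa using ZMod.natCast_eq_zero_iff_even.2 hB⟩
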